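/- Let (X,Y) have a bivariate elliptical density f(x,y) = f₀(‖(x,y)‖²_{e,ρ}) where ‖(x,y)‖_{e,ρ} = ((x²+y²-2ρxy)/(1-ρ²))^{1/2} with ρ ∈ (-1,1). Then with R_e = ‖(X,Y)‖_{e,ρ} and Θ = atan2(Y,X), the joint density of (R_e,Θ) factorizes as f(r,θ) = α(θ)²·r·f₀(r²), where α(θ) = ((1-ρ²)/(1-ρ sin(2θ)))^{1/2}; in particular R_e and Θ are independent. -/

import Mathlib

open MeasureTheory Set

/-- The elliptical norm `‖(x,y)‖_{e,ρ} = ((x²+y²-2ρxy)/(1-ρ²))^{1/2}`. -/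
noncomputable def eNorm (ρ : ℝ) (p : ℝ × ℝ) : ℝ :=
  Real.sqrt ((p.1 ^ 2 + p.2 ^ 2 - 2 * ρ * p.1 * p.2) / (1 - ρ ^ 2))

/-- `α(θ) = ((1-ρ²)/(1-ρ sin 2θ))^{1/2}`. -/
noncomputable def alphaFun (ρ θ : ℝ) : ℝ :=
  Real.sqrt ((1 - ρ ^ 2) / (1 - ρ * Real.sin (2 * θ)))

/-! The map `(r, θ) ↦ polarCoord.symm (r α(θ), θ)` inverts `(R_e, Θ)` off a null set: the ray of
angle `θ` meets the ellipse `‖·‖_{e,ρ} = r` at Euclidean distance `r α(θ)`. Its Jacobian is the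
polar one, `r α(θ)`, times `∂(r α(θ))/∂r = α(θ)`, so the change of variables turns
`f₀(‖p‖²_{e,ρ}) dp` into the product measure `r f₀(r²) dr ⊗ α(θ)² dθ`. A product measure of total
mass one is the product of its marginals, which gives the independence. -/

open Real
open scoped ENNReal

lemma MeasureTheory.Measure.prod_map_fst_prod_map_snd {α β : Type*} [MeasurableSpace α]
    [MeasurableSpace β] {μ : Measure α} {ν : Measure β} [SFinite μ] [SFinite ν]
    (h : μ.prod ν univ = 1) :
    ((μ.prod ν).map Prod.fst).prod ((μ.prod ν).map Prod.snd) = μ.prod ν := by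
  rw [← univ_prod_univ, Measure.prod_prod] at h
  rw [Measure.map_fst_prod, Measure.map_snd_prod, Measure.prod_smul_left, Measure.prod_smul_right,
    smul_smul, mul_comm, h, one_smul]

lemma MeasureTheory.Measure.ae_snd_ne {α β : Type*} [MeasurableSpace α] [MeasurableSpace β]
    {μ : Measure α} {ν : Measure β} [SFinite ν] [NullSingletonClass ν] (c : β) :
    ∀ᵐ x ∂μ.prod ν, x.2 ≠ c :=
  Measure.quasiMeasurePreserving_snd.ae (ae_iff.2 (by simp) : ∀ᵐ y ∂ν, y ≠ c)

section
variable {ρ : ℝ} {f0 : ℝ → ℝ}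

lemma one_sub_sq_pos (hρ : ρ ∈ Ioo (-1 : ℝ) 1) : 0 < 1 - ρ ^ 2 := by
  nlinarith [hρ.1, hρ.2]

lemma one_sub_mul_sin_pos (hρ : ρ ∈ Ioo (-1 : ℝ) 1) (t : ℝ) : 0 < 1 - ρ * sin t := by
  have h : |ρ * sin t| < 1 := by
    rw [abs_mul]
    exact (mul_le_of_le_one_right (abs_nonneg ρ) (abs_sin_le_one t)).trans_lt (abs_lt.2 hρ)
  linarith [le_abs_self (ρ * sin t)]

lemma alphaFun_pos (hρ : ρ ∈ Ioo (-1 : ℝ) 1) (θ : ℝ) : 0 < alphaFun ρ θ :=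
  sqrt_pos.2 (div_pos (one_sub_sq_pos hρ) (one_sub_mul_sin_pos hρ _))

lemma alphaFun_sq (hρ : ρ ∈ Ioo (-1 : ℝ) 1) (θ : ℝ) :
    alphaFun ρ θ ^ 2 = (1 - ρ ^ 2) / (1 - ρ * sin (2 * θ)) :=
  sq_sqrt (div_pos (one_sub_sq_pos hρ) (one_sub_mul_sin_pos hρ _)).le

lemma differentiableAt_alphaFun (hρ : ρ ∈ Ioo (-1 : ℝ) 1) (θ : ℝ) :
    DifferentiableAt ℝ (alphaFun ρ) θ := by
  have hu := one_sub_mul_sin_pos hρ (2 * θ)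
  have hq := div_pos (one_sub_sq_pos hρ) hu
  unfold alphaFun
  fun_prop (disch := first | exact hu.ne' | exact hq.ne')

lemma measurable_alphaFun : Measurable (alphaFun ρ) := by
  unfold alphaFun; fun_prop

lemma continuous_eNorm : Continuous (eNorm ρ) := by
  unfold eNorm; fun_prop

lemma quadForm_polarCoord_symm (s θ : ℝ) :
    (polarCoord.symm (s, θ)).1 ^ 2 + (polarCoord.symm (s, θ)).2 ^ 2
      - 2 * ρ * (polarCoord.symm (s, θ)).1 * (polarCoord.symm (s, θ)).2
      = s ^ 2 * (1 - ρ * sin (2 * θ)) := by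
  simp only [polarCoord_symm_apply, sin_two_mul]
  linear_combination s ^ 2 * sin_sq_add_cos_sq θ

lemma eNorm_polarCoord_symm_mul_alphaFun (hρ : ρ ∈ Ioo (-1 : ℝ) 1) {r : ℝ} (hr : 0 ≤ r)
    (θ : ℝ) : eNorm ρ (polarCoord.symm (r * alphaFun ρ θ, θ)) = r := by
  have hk := one_sub_sq_pos hρ
  have hu := one_sub_mul_sin_pos hρ (2 * θ)
  rw [eNorm, quadForm_polarCoord_symm, mul_pow, alphaFun_sq hρ]
  rw [show r ^ 2 * ((1 - ρ ^ 2) / (1 - ρ * sin (2 * θ))) * (1 - ρ * sin (2 * θ)) / (1 - ρ ^ 2)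
    = r ^ 2 by field_simp]
  exact sqrt_sq hr

noncomputable def ellipticPolar (ρ : ℝ) (p : ℝ × ℝ) : ℝ × ℝ :=
  (eNorm ρ p, Complex.arg ⟨p.1, p.2⟩)

noncomputable def ellipticPolarSymm (ρ : ℝ) (x : ℝ × ℝ) : ℝ × ℝ :=
  polarCoord.symm (x.1 * alphaFun ρ x.2, x.2)

noncomputable def fderivEllipticPolarSymm (ρ : ℝ) (x : ℝ × ℝ) : ℝ × ℝ →L[ℝ] ℝ × ℝ :=
  (fderivPolarCoordSymm (x.1 * alphaFun ρ x.2, x.2)).comp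
    (Matrix.toLin (Module.Basis.finTwoProd ℝ) (Module.Basis.finTwoProd ℝ)
      !![alphaFun ρ x.2, x.1 * deriv (alphaFun ρ) x.2; 0, 1]).toContinuousLinearMap

lemma measurable_ellipticPolar : Measurable (ellipticPolar ρ) :=
  continuous_eNorm.measurable.prodMk
    (Complex.measurable_arg.comp Complex.measurableEquivRealProd.symm.measurable)

lemma ellipticPolar_ellipticPolarSymm (hρ : ρ ∈ Ioo (-1 : ℝ) 1) {x : ℝ × ℝ}
    (hx : x ∈ polarCoord.target) : ellipticPolar ρ (ellipticPolarSymm ρ x) = x := by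
  have hscale : (x.1 * alphaFun ρ x.2, x.2) ∈ polarCoord.target :=
    ⟨mul_pos hx.1 (alphaFun_pos hρ x.2), hx.2⟩
  ext
  · exact eNorm_polarCoord_symm_mul_alphaFun hρ (le_of_lt hx.1) x.2
  · -- `Complex.arg ⟨p.1, p.2⟩` is definitionally the angle `(polarCoord p).2`
    change (polarCoord (polarCoord.symm _)).2 = x.2
    rw [polarCoord.right_inv hscale]

lemma image_ellipticPolarSymm (hρ : ρ ∈ Ioo (-1 : ℝ) 1) (S : Set (ℝ × ℝ)) :
    ellipticPolarSymm ρ '' (polarCoord.target ∩ S) = ellipticPolar ρ ⁻¹' S ∩ polarCoord.source := by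
  ext p
  constructor
  · rintro ⟨x, ⟨hx, hxS⟩, rfl⟩
    refine ⟨?_, polarCoord.map_target ⟨mul_pos hx.1 (alphaFun_pos hρ x.2), hx.2⟩⟩
    rwa [mem_preimage, ellipticPolar_ellipticPolarSymm hρ hx]
  · rintro ⟨hpS, hp⟩
    obtain ⟨hs, hθ⟩ := polarCoord.map_source hp
    set q := polarCoord p
    have hα := alphaFun_pos hρ q.2
    have hx : (q.1 / alphaFun ρ q.2, q.2) ∈ polarCoord.target := ⟨div_pos hs hα, hθ⟩
    have hψ : ellipticPolarSymm ρ (q.1 / alphaFun ρ q.2, q.2) = p := by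
      simp only [ellipticPolarSymm, div_mul_cancel₀ _ hα.ne']
      exact polarCoord.left_inv hp
    refine ⟨_, ⟨hx, ?_⟩, hψ⟩
    rw [← ellipticPolar_ellipticPolarSymm hρ hx, hψ]
    exact hpS

lemma hasFDerivAt_ellipticPolarSymm (hρ : ρ ∈ Ioo (-1 : ℝ) 1) (x : ℝ × ℝ) :
    HasFDerivAt (ellipticPolarSymm ρ) (fderivEllipticPolarSymm ρ x) x := by
  have hα := (differentiableAt_alphaFun hρ x.2).hasDerivAt
  have hscale : HasFDerivAt (fun x : ℝ × ℝ => (x.1 * alphaFun ρ x.2, x.2))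
      (Matrix.toLin (Module.Basis.finTwoProd ℝ) (Module.Basis.finTwoProd ℝ)
        !![alphaFun ρ x.2, x.1 * deriv (alphaFun ρ) x.2; 0, 1]).toContinuousLinearMap x := by
    refine ((hasFDerivAt_fst.mul (hα.comp_hasFDerivAt x hasFDerivAt_snd)).prodMk
      hasFDerivAt_snd).congr_fderiv ?_
    rw [Matrix.toLin_finTwoProd_toContinuousLinearMap]
    ext <;> simp
  exact (hasFDerivAt_polarCoord_symm _).comp x hscale

lemma det_fderivEllipticPolarSymm (x : ℝ × ℝ) :
    (fderivEllipticPolarSymm ρ x).det = x.1 * alphaFun ρ x.2 ^ 2 := by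
  rw [fderivEllipticPolarSymm, ContinuousLinearMap.det, ContinuousLinearMap.toLinearMap_comp,
    LinearMap.det_comp, ← ContinuousLinearMap.det, det_fderivPolarCoordSymm,
    LinearMap.coe_toContinuousLinearMap, LinearMap.det_toLin, Matrix.det_fin_two_of]
  ring

lemma setLIntegral_preimage_ellipticPolar (hρ : ρ ∈ Ioo (-1 : ℝ) 1) (F : ℝ × ℝ → ℝ≥0∞)
    {S : Set (ℝ × ℝ)} (hS : MeasurableSet S) :
    ∫⁻ p in ellipticPolar ρ ⁻¹' S, F p
      = ∫⁻ x in polarCoord.target ∩ S,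
          ENNReal.ofReal (x.1 * alphaFun ρ x.2 ^ 2) * F (ellipticPolarSymm ρ x) := by
  have hsource : (ellipticPolar ρ ⁻¹' S ∩ polarCoord.source : Set (ℝ × ℝ)) =ᵐ[volume]
      ellipticPolar ρ ⁻¹' S :=
    inter_ae_eq_left_of_ae_eq_univ polarCoord_source_ae_eq_univ
  have hinj : InjOn (ellipticPolarSymm ρ) (polarCoord.target ∩ S) := fun x hx y hy h => by
    rw [← ellipticPolar_ellipticPolarSymm hρ hx.1, ← ellipticPolar_ellipticPolarSymm hρ hy.1, h]
  rw [← setLIntegral_congr hsource, ← image_ellipticPolarSymm hρ,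
    lintegral_image_eq_lintegral_abs_det_fderiv_mul volume
      (polarCoord.open_target.measurableSet.inter hS)
      (fun x _ => (hasFDerivAt_ellipticPolarSymm hρ x).hasFDerivWithinAt) hinj]
  refine setLIntegral_congr_fun (polarCoord.open_target.measurableSet.inter hS) fun x hx => ?_
  rw [det_fderivEllipticPolarSymm, abs_of_pos (mul_pos hx.1.1 (pow_pos (alphaFun_pos hρ _) 2))]

noncomputable def radialDensity (f0 : ℝ → ℝ) : ℝ → ℝ≥0∞ :=
  (Ioi 0).indicator fun r => ENNReal.ofReal (r * f0 (r ^ 2))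

noncomputable def angularDensity (ρ : ℝ) : ℝ → ℝ≥0∞ :=
  (Ioo (-π) π).indicator fun θ => ENNReal.ofReal (alphaFun ρ θ ^ 2)

lemma measurable_radialDensity (hf0 : Measurable f0) :
    Measurable (radialDensity f0) :=
  (measurable_id.mul (hf0.comp (measurable_id.pow_const 2))).ennreal_ofReal.indicator
    measurableSet_Ioi

lemma measurable_angularDensity : Measurable (angularDensity ρ) :=
  (measurable_alphaFun.pow_const 2).ennreal_ofReal.indicator measurableSet_Ioo

lemma radialDensity_mul_angularDensity :
    (fun x : ℝ × ℝ => radialDensity f0 x.1 * angularDensity ρ x.2)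
      = polarCoord.target.indicator fun x =>
          ENNReal.ofReal (x.1 * f0 (x.1 ^ 2)) * ENNReal.ofReal (alphaFun ρ x.2 ^ 2) := by
  ext x
  simp only [radialDensity, angularDensity, polarCoord_target, indicator, mem_prod]
  split_ifs <;> simp_all

lemma map_ellipticPolar_withDensity (hρ : ρ ∈ Ioo (-1 : ℝ) 1) (hf0 : Measurable f0) :
    (volume.withDensity fun p => ENNReal.ofReal (f0 (eNorm ρ p ^ 2))).map (ellipticPolar ρ)
      = (volume.withDensity (radialDensity f0)).prod (volume.withDensity (angularDensity ρ)) := by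
  rw [prod_withDensity (measurable_radialDensity hf0) measurable_angularDensity,
    ← Measure.volume_eq_prod, radialDensity_mul_angularDensity]
  have htarget := polarCoord.open_target.measurableSet
  ext S hS
  rw [Measure.map_apply measurable_ellipticPolar hS,
    withDensity_apply _ (measurable_ellipticPolar hS), withDensity_apply _ hS,
    setLIntegral_preimage_ellipticPolar hρ _ hS, lintegral_indicator htarget,
    Measure.restrict_restrict htarget]
  refine setLIntegral_congr_fun (htarget.inter hS) fun x hx => ?_
  have hr : 0 < x.1 := hx.1.1
  rw [ellipticPolarSymm, eNorm_polarCoord_symm_mul_alphaFun hρ hr.le,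
    ← ENNReal.ofReal_mul (by positivity), ← ENNReal.ofReal_mul' (sq_nonneg _)]
  congr 1
  ring

lemma ofReal_ite_ae_eq_radialDensity_mul_angularDensity :
    (fun x : ℝ × ℝ => ENNReal.ofReal (if 0 < x.1 ∧ -π < x.2 ∧ x.2 ≤ π
        then alphaFun ρ x.2 ^ 2 * x.1 * f0 (x.1 ^ 2) else 0))
      =ᵐ[volume] fun x => radialDensity f0 x.1 * angularDensity ρ x.2 := by
  rw [Measure.volume_eq_prod]
  filter_upwards [Measure.ae_snd_ne π] with x hx
  rw [congrFun radialDensity_mul_angularDensity x, indicator, polarCoord_target]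
  simp only [mem_prod, mem_Ioi, mem_Ioo, ← hx.le_iff_lt]
  split_ifs
  · rw [← ENNReal.ofReal_mul' (sq_nonneg _)]
    congr 1
    ring
  · exact ENNReal.ofReal_zero

end

theorem stmt3_general (ρ : ℝ) (hρ : ρ ∈ Set.Ioo (-1 : ℝ) 1) (f0 : ℝ → ℝ)
    (hmeas : Measurable f0) (hnn : ∀ t, 0 ≤ f0 t)
    (hprob : (∫ p : ℝ × ℝ, f0 ((eNorm ρ p) ^ 2)) = 1) :
    (Measure.map (fun p : ℝ × ℝ => (eNorm ρ p, Complex.arg ⟨p.1, p.2⟩))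
        (Measure.withDensity volume (fun p => ENNReal.ofReal (f0 ((eNorm ρ p) ^ 2))))
      = Measure.withDensity volume (fun x : ℝ × ℝ => ENNReal.ofReal
          (if 0 < x.1 ∧ -Real.pi < x.2 ∧ x.2 ≤ Real.pi
            then (alphaFun ρ x.2) ^ 2 * x.1 * f0 (x.1 ^ 2) else 0))) ∧
    (Measure.map (fun p : ℝ × ℝ => (eNorm ρ p, Complex.arg ⟨p.1, p.2⟩))
        (Measure.withDensity volume (fun p => ENNReal.ofReal (f0 ((eNorm ρ p) ^ 2))))
      = (Measure.map (fun p : ℝ × ℝ => eNorm ρ p)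
            (Measure.withDensity volume (fun p => ENNReal.ofReal (f0 ((eNorm ρ p) ^ 2))))).prod
          (Measure.map (fun p : ℝ × ℝ => Complex.arg ⟨p.1, p.2⟩)
            (Measure.withDensity volume
              (fun p => ENNReal.ofReal (f0 ((eNorm ρ p) ^ 2)))))) := by
  set μ := volume.withDensity fun p : ℝ × ℝ => ENNReal.ofReal (f0 (eNorm ρ p ^ 2))
  change μ.map (ellipticPolar ρ) = _ ∧ μ.map (ellipticPolar ρ) = _
  have hmap := map_ellipticPolar_withDensity hρ hmeas
  have hμ : μ univ = 1 := by
    rw [withDensity_apply _ MeasurableSet.univ, Measure.restrict_univ,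
      ← ENNReal.toReal_eq_one_iff, ← integral_eq_lintegral_of_nonneg_ae
        (ae_of_all _ fun p => hnn _)
        (hmeas.comp (continuous_eNorm.measurable.pow_const 2)).aestronglyMeasurable]
    exact hprob
  have hfst : μ.map (eNorm ρ) = (μ.map (ellipticPolar ρ)).map Prod.fst := by
    rw [Measure.map_map measurable_fst measurable_ellipticPolar]
    rfl
  have hsnd : μ.map (fun p => Complex.arg ⟨p.1, p.2⟩)
      = (μ.map (ellipticPolar ρ)).map Prod.snd := by
    rw [Measure.map_map measurable_snd measurable_ellipticPolar]
    rfl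
  refine ⟨?_, ?_⟩
  · rw [hmap, prod_withDensity (measurable_radialDensity hmeas) measurable_angularDensity,
      ← Measure.volume_eq_prod]
    exact withDensity_congr_ae ofReal_ite_ae_eq_radialDensity_mul_angularDensity.symm
  · rw [hfst, hsnd, hmap]
    refine (Measure.prod_map_fst_prod_map_snd ?_).symm
    rw [← hmap, Measure.map_apply measurable_ellipticPolar MeasurableSet.univ, preimage_univ,
      hμ]

/-- For an elliptical density `f(x,y) = f₀(‖(x,y)‖²_{e,ρ})`, the pair
`(R_e, Θ) = (‖(X,Y)‖_{e,ρ}, atan2(Y,X))` has joint density `α(θ)²·r·f₀(r²)`,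
and `R_e` and `Θ` are independent. -/
theorem stmt3 (ρ : ℝ) (hρ : ρ ∈ Set.Ioo (-1 : ℝ) 1) (f0 : ℝ → ℝ)
    (hmeas : Measurable f0) (hnn : ∀ t, 0 ≤ f0 t)
    (hint : MeasureTheory.IntegrableOn (fun r => r * f0 (r ^ 2)) (Set.Ioi 0))
    (hprob : (∫ p : ℝ × ℝ, f0 ((eNorm ρ p) ^ 2)) = 1) :
    (Measure.map (fun p : ℝ × ℝ => (eNorm ρ p, Complex.arg ⟨p.1, p.2⟩))
        (Measure.withDensity volume (fun p => ENNReal.ofReal (f0 ((eNorm ρ p) ^ 2))))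
      = Measure.withDensity volume (fun x : ℝ × ℝ => ENNReal.ofReal
          (if 0 < x.1 ∧ -Real.pi < x.2 ∧ x.2 ≤ Real.pi
            then (alphaFun ρ x.2) ^ 2 * x.1 * f0 (x.1 ^ 2) else 0))) ∧
    (Measure.map (fun p : ℝ × ℝ => (eNorm ρ p, Complex.arg ⟨p.1, p.2⟩))
        (Measure.withDensity volume (fun p => ENNReal.ofReal (f0 ((eNorm ρ p) ^ 2))))
      = (Measure.map (fun p : ℝ × ℝ => eNorm ρ p)
            (Measure.withDensity volume (fun p => ENNReal.ofReal (f0 ((eNorm ρ p) ^ 2))))).prod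
          (Measure.map (fun p : ℝ × ℝ => Complex.arg ⟨p.1, p.2⟩)
            (Measure.withDensity volume
              (fun p => ENNReal.ofReal (f0 ((eNorm ρ p) ^ 2)))))) :=
  stmt3_general ρ hρ f0 hmeas hnn hprob
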